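/- Let E_1,...,E_n,E_{n+1} be exchangeable real-valued random variables with no ties almost surely. Let Q̂ be the ⌈(1−α)(n+1)⌉-th smallest of E_1,...,E_n, and suppose ⌈(1−α)(n+1)⌉ ≤ n. Then P[E_{n+1} ≤ Q̂] ≤ 1 − α + 1/(n+1). -/

import Mathlib

/-!
Let `R j` be the rank of `E j` among `E 1, …, E (n+1)` and `k = ⌈(1-α)(n+1)⌉`. Off the null
event of ties, `E (n+1) ≤ Q̂` forces `R (n+1) ≤ k`, and exactly `k` indices `j` have `R j ≤ k`.
Exchangeability makes `P[R j ≤ k]` independent of `j`, so each of these probabilities is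
`k / (n+1) ≤ 1 - α + 1/(n+1)`.
-/

open MeasureTheory

/-- The `k`-th smallest value of a multiset of reals (1-indexed),
defined as `⊤` when `k` exceeds the number of elements. -/
noncomputable def kthSmallest (s : Multiset ℝ) (k : ℕ) : EReal :=
  if h : k - 1 < Multiset.card s then
    (((s.sort (· ≤ ·)).get ⟨k - 1, by simpa using h⟩ : ℝ) : EReal)
  else ⊤

open Finset
open scoped ENNReal

section Rank

variable {ι α : Type*} [Fintype ι] [LinearOrder α]

def rank (x : ι → α) (j : ι) : ℕ := #{i | x i ≤ x j}

lemma rank_comp_perm (x : ι → α) (π : Equiv.Perm ι) (j : ι) :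
    rank (fun i => x (π i)) j = rank x (π j) :=
  card_equiv π (by simp)

lemma rank_lt_rank {x : ι → α} {i j : ι} (h : x i < x j) : rank x i < rank x j := by
  refine card_lt_card ((ssubset_iff_of_subset fun a ha => ?_).2 ⟨j, by simpa using h⟩)
  simp only [mem_filter, mem_univ, true_and] at ha ⊢
  exact ha.trans h.le

lemma rank_injective {x : ι → α} (hx : Function.Injective x) : Function.Injective (rank x) := by
  intro i j hij
  rcases lt_trichotomy (x i) (x j) with h | h | h
  · exact absurd hij (rank_lt_rank h).ne
  · exact hx h
  · exact absurd hij (rank_lt_rank h).ne'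

lemma rank_mem_Icc (x : ι → α) (j : ι) : rank x j ∈ Icc 1 (Fintype.card ι) :=
  mem_Icc.2 ⟨card_pos.2 ⟨j, by simp⟩, card_le_univ _⟩

lemma card_rank_le {x : ι → α} (hx : Function.Injective x) {k : ℕ} (hk : k ≤ Fintype.card ι) :
    #{j | rank x j ≤ k} = k := by
  classical
  have hinj := rank_injective hx
  have himage : univ.image (rank x) = Icc 1 (Fintype.card ι) :=
    eq_of_subset_of_card_le (fun _ ha => by
      obtain ⟨j, -, rfl⟩ := mem_image.1 ha
      exact rank_mem_Icc x j) (by simp [card_image_of_injective _ hinj])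
  calc #{j | rank x j ≤ k} = #{a ∈ univ.image (rank x) | a ≤ k} := by
        rw [filter_image, card_image_of_injective _ hinj]
    _ = #(Icc 1 k) := by
        rw [himage]
        congr 1
        ext a
        simp only [mem_filter, mem_Icc]
        omega
    _ = k := by simp

end Rank

lemma List.countP_lt_le_of_pairwise {α : Type*} [LinearOrder α] {l : List α}
    (hl : l.Pairwise (· ≤ ·)) {k : ℕ} (hk : k < l.length) {t : α} (ht : t ≤ l[k]) :
    l.countP (· < t) ≤ k := by
  induction l generalizing k with
  | nil => simp at hk
  | cons a l ih =>
    obtain ⟨ha, hl⟩ := List.pairwise_cons.1 hl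
    cases k with
    | zero =>
      simp only [List.getElem_cons_zero] at ht
      simp only [nonpos_iff_eq_zero, List.countP_eq_zero, decide_eq_true_eq, not_lt]
      intro b hb
      rcases List.mem_cons.1 hb with rfl | hb
      · exact ht
      · exact ht.trans (ha b hb)
    | succ k =>
      rw [List.countP_cons]
      have := ih hl (k := k) (by simpa using hk) (by simpa using ht)
      split_ifs <;> omega

-- `1 ≤ k` is needed: `kthSmallest s 0 = kthSmallest s 1` because `0 - 1 = 0` in `ℕ`.
lemma countP_lt_of_le_kthSmallest {s : Multiset ℝ} {k : ℕ} (hk : 1 ≤ k) {t : ℝ}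
    (ht : (t : EReal) ≤ kthSmallest s k) : s.countP (· < t) < k := by
  unfold kthSmallest at ht
  split_ifs at ht with h
  · have hsort := (s.sort (· ≤ ·)).countP_lt_le_of_pairwise (s.pairwise_sort _)
      (k := k - 1) (by simpa using h) (t := t) (EReal.coe_le_coe_iff.1 ht)
    rw [← s.sort_eq (· ≤ ·), Multiset.coe_countP]
    omega
  · exact (Multiset.countP_le_card _ _).trans_lt (by omega)

lemma rank_last_le_of_le_kthSmallest {n k : ℕ} {x : Fin (n + 1) → ℝ} (hx : Function.Injective x)
    (hk : 1 ≤ k)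
    (h : (x (Fin.last n) : EReal) ≤
      kthSmallest (Multiset.map (fun i : Fin n => x i.castSucc) univ.val) k) :
    rank x (Fin.last n) ≤ k := by
  have hlt : #{i : Fin n | x i.castSucc < x (Fin.last n)} < k := by
    have := countP_lt_of_le_kthSmallest hk h
    rwa [Multiset.countP_map] at this
  have hle_iff_lt : ∀ i : Fin n, x i.castSucc ≤ x (Fin.last n) ↔ x i.castSucc < x (Fin.last n) :=
    fun i => (hx.ne (Fin.castSucc_lt_last i).ne).le_iff_lt
  have hrank : rank x (Fin.last n) = #{i : Fin n | x i.castSucc < x (Fin.last n)} + 1 := by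
    simp only [rank, card_filter, Fin.sum_univ_castSucc, le_refl, if_true, hle_iff_lt]
  omega

section Exchangeable

variable {Ω ι : Type*} [MeasurableSpace Ω] [Fintype ι] {μ : Measure Ω} {F : Ω → ι → ℝ}

def Exchangeable (μ : Measure Ω) (F : Ω → ι → ℝ) : Prop :=
  ∀ π : Equiv.Perm ι, μ.map (fun ω i => F ω (π i)) = μ.map F

lemma measurable_rank (j : ι) : Measurable fun x : ι → ℝ => rank x j := by
  simp only [rank, card_filter]
  exact Finset.measurable_sum _ fun i _ => Measurable.ite
    (measurableSet_le (measurable_pi_apply i) (measurable_pi_apply j))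
    measurable_const measurable_const

lemma ae_injective_of_measure_eq_zero (hties : ∀ i j, i ≠ j → μ {ω | F ω i = F ω j} = 0) :
    ∀ᵐ ω ∂μ, Function.Injective (F ω) := by
  refine ae_all_iff.2 fun i => ae_all_iff.2 fun j => ?_
  by_cases hij : i = j
  · exact Filter.Eventually.of_forall fun _ _ => hij
  · filter_upwards [measure_eq_zero_iff_ae_notMem.1 (hties i j hij)] with ω hω h
    exact absurd h hω

lemma sum_measure_rank_le (hF : Measurable F) (hinj : ∀ᵐ ω ∂μ, Function.Injective (F ω))
    {k : ℕ} (hk : k ≤ Fintype.card ι) :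
    ∑ j, μ {ω | rank (F ω) j ≤ k} = k * μ Set.univ := by
  have hA : ∀ j, MeasurableSet {ω | rank (F ω) j ≤ k} :=
    fun j => (measurable_rank j).comp hF measurableSet_Iic
  calc ∑ j, μ {ω | rank (F ω) j ≤ k}
      = ∫⁻ ω, ∑ j, {ω | rank (F ω) j ≤ k}.indicator 1 ω ∂μ := by
        rw [lintegral_finsetSum _ fun j _ => measurable_one.indicator (hA j)]
        simp only [lintegral_indicator_one (hA _)]
    _ = ∫⁻ _, (k : ℝ≥0∞) ∂μ := by
        refine lintegral_congr_ae (hinj.mono fun ω hω => ?_)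
        simp only [Set.indicator_apply, Set.mem_ofPred_eq, Pi.one_apply, sum_boole,
          card_rank_le hω hk]
    _ = k * μ Set.univ := lintegral_const _

lemma Exchangeable.measure_rank_le_eq (hex : Exchangeable μ F) (hF : Measurable F) (k : ℕ)
    (i j : ι) : μ {ω | rank (F ω) i ≤ k} = μ {ω | rank (F ω) j ≤ k} := by
  classical
  let π := Equiv.swap i j
  have hS : MeasurableSet {x : ι → ℝ | rank x j ≤ k} := measurable_rank j measurableSet_Iic
  have hπ : Measurable fun ω i => F ω (π i) :=
    measurable_pi_lambda _ fun i => (measurable_pi_apply _).comp hF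
  calc μ {ω | rank (F ω) i ≤ k} = μ.map (fun ω i => F ω (π i)) {x | rank x j ≤ k} := by
        rw [Measure.map_apply hπ hS]
        simp [Set.preimage, rank_comp_perm, π]
    _ = μ {ω | rank (F ω) j ≤ k} := by rw [hex π, Measure.map_apply hF hS]; rfl

lemma Exchangeable.measure_rank_le [IsProbabilityMeasure μ] (hex : Exchangeable μ F)
    (hF : Measurable F) (hinj : ∀ᵐ ω ∂μ, Function.Injective (F ω)) {k : ℕ}
    (hk : k ≤ Fintype.card ι) (j : ι) :
    μ {ω | rank (F ω) j ≤ k} = k / Fintype.card ι := by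
  have hsum := sum_measure_rank_le hF hinj hk
  simp only [hex.measure_rank_le_eq hF k _ j, sum_const, card_univ, nsmul_eq_mul, measure_univ,
    mul_one] at hsum
  rw [ENNReal.eq_div_iff (by simpa using (Fintype.card_pos_iff.2 ⟨j⟩).ne') (by simp), hsum]

end Exchangeable

lemma natCeil_mul_div_le_ofReal {a : ℝ} (ha : 0 ≤ a) (m : ℕ) :
    (⌈a * m⌉₊ : ℝ≥0∞) / m ≤ ENNReal.ofReal (a + 1 / m) := by
  rcases Nat.eq_zero_or_pos m with rfl | hm
  · simp
  have hm' : (0 : ℝ) < m := by exact_mod_cast hm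
  rw [← ENNReal.ofReal_natCast, ← ENNReal.ofReal_natCast m, ← ENNReal.ofReal_div_of_pos hm']
  refine ENNReal.ofReal_le_ofReal ((div_le_iff₀ hm').2 ?_)
  calc (⌈a * m⌉₊ : ℝ) ≤ a * m + 1 := (Nat.ceil_lt_add_one (by positivity)).le
    _ = (a + 1 / m) * m := by field_simp

theorem stmt_6_general {Ω : Type*} [MeasurableSpace Ω] (μ : Measure Ω) [IsProbabilityMeasure μ]
    (n : ℕ) (α : ℝ) (hα : α ∈ Set.Ioo (0:ℝ) 1)
    (hk : ⌈(1 - α) * ((n : ℝ) + 1)⌉₊ ≤ n)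
    (E : Fin (n + 1) → Ω → ℝ)
    (hmeas : ∀ i, Measurable (E i))
    (hexch : ∀ π : Equiv.Perm (Fin (n + 1)),
      Measure.map (fun ω => fun i => E (π i) ω) μ
        = Measure.map (fun ω => fun i => E i ω) μ)
    (hties : ∀ i j : Fin (n + 1), i ≠ j → μ {ω | E i ω = E j ω} = 0) :
    μ {ω | (E (Fin.last n) ω : EReal) ≤
        kthSmallest (Multiset.map (fun i : Fin n => E i.castSucc ω) Finset.univ.val)
          ⌈(1 - α) * ((n : ℝ) + 1)⌉₊}
      ≤ ENNReal.ofReal (1 - α + 1 / ((n : ℝ) + 1)) := by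
  set k := ⌈(1 - α) * ((n : ℝ) + 1)⌉₊
  let F : Ω → Fin (n + 1) → ℝ := fun ω i => E i ω
  have hF : Measurable F := measurable_pi_lambda _ hmeas
  have hex : Exchangeable μ F := hexch
  have hk1 : 1 ≤ k := Nat.ceil_pos.2 (mul_pos (sub_pos.2 hα.2) (by positivity))
  have hinj : ∀ᵐ ω ∂μ, Function.Injective (F ω) := ae_injective_of_measure_eq_zero hties
  calc _ ≤ μ {ω | rank (F ω) (Fin.last n) ≤ k} :=
        measure_mono_ae (hinj.mono fun ω hω h => rank_last_le_of_le_kthSmallest hω hk1 h)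
    _ = k / ((n + 1 : ℕ) : ℝ≥0∞) := by
        rw [hex.measure_rank_le hF hinj (by rw [Fintype.card_fin]; omega), Fintype.card_fin]
    _ ≤ _ := by
        simpa using natCeil_mul_div_le_ofReal (sub_nonneg.2 hα.2.le) (n + 1)

theorem stmt_6 {Ω : Type*} [MeasurableSpace Ω] (μ : Measure Ω) [IsProbabilityMeasure μ]
    (n : ℕ) (hn : 1 ≤ n) (α : ℝ) (hα : α ∈ Set.Ioo (0:ℝ) 1)
    (hk : ⌈(1 - α) * ((n : ℝ) + 1)⌉₊ ≤ n)
    (E : Fin (n + 1) → Ω → ℝ)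
    (hmeas : ∀ i, Measurable (E i))
    (hexch : ∀ π : Equiv.Perm (Fin (n + 1)),
      Measure.map (fun ω => fun i => E (π i) ω) μ
        = Measure.map (fun ω => fun i => E i ω) μ)
    (hties : ∀ i j : Fin (n + 1), i ≠ j → μ {ω | E i ω = E j ω} = 0) :
    μ {ω | (E (Fin.last n) ω : EReal) ≤
        kthSmallest (Multiset.map (fun i : Fin n => E i.castSucc ω) Finset.univ.val)
          ⌈(1 - α) * ((n : ℝ) + 1)⌉₊}
      ≤ ENNReal.ofReal (1 - α + 1 / ((n : ℝ) + 1)) :=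
  stmt_6_general μ n α hα hk E hmeas hexch hties
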